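/- Let C_n be the bidirected cycle on vertices v₀,…,v_{n−1} (indices modulo n), where every clockwise edge (v_i, v_{i+1}) has weight p > 0 and every counterclockwise edge (v_i, v_{i−1}) has weight q > 0. If the initial blue set B₀ consists of k consecutive vertices of the cycle, 1 ≤ k ≤ n, then ept_rzf(C_n, B₀) = n − k. In particular the expected propagation time is independent of p and q. -/

import Mathlib

open scoped ENNReal NNReal

namespace RZF

variable {V : Type*} [Fintype V] [DecidableEq V]

/-- Probability that the white vertex `x` turns blue in one round of weighted
randomized zero forcing with weights `w`, given the current blue set `B`
(`0` when the total incoming weight of `x` is `0`). -/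
noncomputable def turnProb (w : V → V → ℝ≥0) (B : Finset V) (x : V) : ℝ≥0 :=
  (∑ u ∈ B, w u x) / ∑ u, w u x

/-- One-round transition probability of the RZF Markov chain from blue set `B`
to blue set `C`: each white vertex independently turns blue with probability
`turnProb w B ·`, and blue vertices stay blue. -/
noncomputable def stepProb (w : V → V → ℝ≥0) (B C : Finset V) : ℝ≥0∞ :=
  if B ⊆ C then
    (∏ x ∈ C \ B, (turnProb w B x : ℝ≥0∞)) *
      ∏ x ∈ Cᶜ, (1 - (turnProb w B x : ℝ≥0∞))
  else 0

/-- Distribution of the blue set after `t` rounds, started from `S`. -/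
noncomputable def state (w : V → V → ℝ≥0) (S : Finset V) : ℕ → Finset V → ℝ≥0∞
  | 0 => fun C => if C = S then 1 else 0
  | t + 1 => fun C => ∑ B : Finset V, state w S t B * stepProb w B C

/-- Expected propagation time `∑ₜ P(Bₜ ≠ V(G))`; this equals `E[τ]` when the
all-blue state is reachable from `S`, and `∞` otherwise. -/
noncomputable def ept (w : V → V → ℝ≥0) (S : Finset V) : ℝ≥0∞ :=
  ∑' t : ℕ, ∑ C ∈ Finset.univ.filter (fun C : Finset V => C ≠ Finset.univ),
    state w S t C

/-- Minimum expected propagation time over singleton starting sets. -/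
noncomputable def eptMin (w : V → V → ℝ≥0) : ℝ≥0∞ :=
  ⨅ v : V, ept w {v}

/-- The weight function of an unweighted directed graph: weight `1` on each
edge and `0` otherwise, so that `turnProb` is the fraction of in-neighbors
that are blue. -/
def unweight (adj : V → V → Prop) [DecidableRel adj] : V → V → ℝ≥0 :=
  fun u v => if adj u v then 1 else 0

end RZF

/-- `reachIn adj t a b` : there is a directed path of length at most `t`
from `a` to `b` in the directed graph with adjacency relation `adj`. -/
def reachIn {V : Type*} (adj : V → V → Prop) : ℕ → V → V → Prop
  | 0, a, b => a = b
  | t + 1, a, b => reachIn adj t a b ∨ ∃ c, reachIn adj t a c ∧ adj c b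

/-- The weight function of the weighted bidirected cycle on `Fin n`: each
clockwise edge `(vᵢ, vᵢ₊₁)` has weight `p` and each counterclockwise edge
`(vᵢ, vᵢ₋₁)` has weight `q` (indices mod `n`). -/
noncomputable def cycleWeight (n : ℕ) (p q : ℝ≥0) : Fin n → Fin n → ℝ≥0 :=
  fun u v =>
    (if (v : ℕ) = ((u : ℕ) + 1) % n then p else 0) +
      (if ((v : ℕ) + 1) % n = (u : ℕ) then q else 0)

/-!
The number of white vertices `#Bᶜ` is a potential. From a blue arc only the two white neighbours
of its ends can turn blue, with probabilities `p / (p + q)` and `q / (p + q)` (adding up when they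
coincide). So the blue set stays an arc and, until it is everything, exactly one vertex turns
blue per round in expectation.
Hence `E #B_tᶜ` drops by `P(B_t ≠ V)` in every round, and summing over all rounds gives
`ept = #B₀ᶜ = n - k`.
-/

open Finset

namespace Finset

variable {ι R : Type*} [DecidableEq ι] [CommSemiring R] {s : Finset ι} {f g : ι → R}

theorem sum_powerset_prod_mul_prod_eq_one (h : ∀ x ∈ s, f x + g x = 1) :
    ∑ T ∈ s.powerset, (∏ x ∈ T, f x) * ∏ x ∈ s \ T, g x = 1 := by
  rw [← prod_add, prod_congr rfl h, prod_const_one]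

theorem sum_powerset_filter_mem_prod_mul_prod (h : ∀ x ∈ s, f x + g x = 1) {a : ι}
    (ha : a ∈ s) :
    ∑ T ∈ s.powerset with a ∈ T, (∏ x ∈ T, f x) * ∏ x ∈ s \ T, g x = f a := by
  -- Setting `g a = 0` kills exactly the terms with `a ∉ T`.
  have hprod : ∏ x ∈ s, (f x + Function.update g a 0 x) = f a := by
    rw [← mul_prod_erase s _ ha, Function.update_self, add_zero,
      prod_congr rfl fun x hx => by
        rw [Function.update_of_ne (ne_of_mem_erase hx), h x (mem_of_mem_erase hx)],
      prod_const_one, mul_one]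
  rw [← hprod, prod_add, sum_filter]
  refine sum_congr rfl fun T _ => ?_
  split_ifs with haT
  · refine congrArg _ (prod_congr rfl fun x hx => ?_)
    exact (Function.update_of_ne (ne_of_mem_of_not_mem haT (mem_sdiff.1 hx).2).symm _ _).symm
  · rw [prod_eq_zero (mem_sdiff.2 ⟨ha, haT⟩) (Function.update_self _ _ _), mul_zero]

end Finset

open Filter Topology in
theorem ENNReal.tsum_eq_of_succ_add_eq_of_le_mul {P M : ℕ → ℝ≥0∞} {K : ℝ≥0∞}
    (hM₀ : M 0 ≠ ∞) (hK : K ≠ ∞) (hstep : ∀ t, M (t + 1) + P t = M t)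
    (hMP : ∀ t, M t ≤ K * P t) :
    ∑' t, P t = M 0 := by
  have htel : ∀ T, M T + ∑ t ∈ range T, P t = M 0 := by
    intro T
    induction T with
    | zero => simp
    | succ T ih =>
      rw [sum_range_succ, ← add_assoc, add_comm (M _), add_assoc, hstep, add_comm, ih]
  have hP : Tendsto P atTop (𝓝 0) :=
    ENNReal.tendsto_atTop_zero_of_tsum_ne_top <| ne_top_of_le_ne_top hM₀ <|
      ENNReal.tsum_le_of_sum_range_le fun T => htel T ▸ le_add_self
  have hM : Tendsto M atTop (𝓝 0) := by
    refine tendsto_of_tendsto_of_tendsto_of_le_of_le tendsto_const_nhds ?_ (fun _ => zero_le) hMP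
    simpa using ENNReal.Tendsto.const_mul hP (Or.inr hK)
  have hlim := hM.add (ENNReal.tendsto_nat_tsum P)
  simp only [htel, zero_add] at hlim
  exact tendsto_nhds_unique hlim tendsto_const_nhds

namespace RZF

variable {V : Type*} [Fintype V] (w : V → V → ℝ≥0)

theorem turnProb_le_one (B : Finset V) (x : V) : turnProb w B x ≤ 1 :=
  div_le_one_of_le₀ (sum_le_sum_of_subset B.subset_univ) zero_le

theorem turnProb_add_one_sub (B : Finset V) (x : V) :
    (turnProb w B x : ℝ≥0∞) + (1 - turnProb w B x) = 1 :=
  add_tsub_cancel_of_le (by exact_mod_cast turnProb_le_one w B x)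

variable [DecidableEq V]

theorem subset_of_stepProb_ne_zero {B C : Finset V} (h : stepProb w B C ≠ 0) : B ⊆ C := by
  by_contra hBC
  simp [stepProb, hBC] at h

theorem turnProb_ne_zero_of_stepProb_ne_zero {B C : Finset V} (h : stepProb w B C ≠ 0) {x : V}
    (hxC : x ∈ C) (hxB : x ∉ B) : turnProb w B x ≠ 0 := by
  intro hx
  apply h
  rw [stepProb, if_pos (subset_of_stepProb_ne_zero w h),
    prod_eq_zero (mem_sdiff.2 ⟨hxC, hxB⟩) (by simp [hx]), zero_mul]

theorem sum_stepProb_mul (B : Finset V) (φ : Finset V → ℝ≥0∞) :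
    ∑ C, stepProb w B C * φ C =
      ∑ T ∈ Bᶜ.powerset, ((∏ x ∈ T, (turnProb w B x : ℝ≥0∞)) *
        ∏ x ∈ Bᶜ \ T, (1 - (turnProb w B x : ℝ≥0∞))) * φ (B ∪ T) := by
  rw [← sum_filter_of_ne (p := (B ⊆ ·)) fun C _ h =>
    subset_of_stepProb_ne_zero w (left_ne_zero_of_mul h)]
  refine sum_nbij' (· \ B) (B ∪ ·) (fun C _ => ?_) (fun T _ => by simp) (fun C hC => ?_)
    (fun T hT => ?_) (fun C hC => ?_)
  · simp [subset_iff]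
  · exact union_sdiff_of_subset (mem_filter.1 hC).2
  · exact union_sdiff_cancel_left (disjoint_right.2 fun x hx => mem_compl.1 (mem_powerset.1 hT hx))
  · have hBC := (mem_filter.1 hC).2
    have hcompl : Bᶜ \ (C \ B) = Cᶜ := by
      ext x
      have := @hBC x
      simp only [Finset.mem_sdiff, mem_compl]
      tauto
    rw [stepProb, if_pos hBC, union_sdiff_of_subset hBC, hcompl]

theorem sum_stepProb (B : Finset V) : ∑ C, stepProb w B C = 1 := by
  simpa only [mul_one, sum_powerset_prod_mul_prod_eq_one fun x _ => turnProb_add_one_sub w B x]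
    using sum_stepProb_mul w B fun _ => 1

theorem sum_filter_mem_stepProb {B : Finset V} {x : V} (hx : x ∉ B) :
    ∑ C with x ∈ C, stepProb w B C = turnProb w B x := by
  have := sum_stepProb_mul w B fun C => if x ∈ C then 1 else 0
  simp only [mul_ite, mul_one, mul_zero, ← sum_filter, mem_union, hx, false_or] at this
  rw [this, sum_powerset_filter_mem_prod_mul_prod (fun y _ => turnProb_add_one_sub w B y)
    (mem_compl.2 hx)]

theorem sum_stepProb_mul_card_sdiff (B : Finset V) :
    ∑ C, stepProb w B C * #(C \ B) = ∑ x ∈ Bᶜ, (turnProb w B x : ℝ≥0∞) := by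
  have hcard (C : Finset V) :
      (#(C \ B) : ℝ≥0∞) = ∑ x ∈ Bᶜ, if x ∈ C then 1 else 0 := by
    rw [sum_boole, filter_mem_eq_inter, inter_comm, ← sdiff_eq_inter_compl]
  simp only [hcard, mul_sum, mul_ite, mul_one, mul_zero]
  rw [sum_comm]
  refine sum_congr rfl fun x hx => ?_
  rw [← sum_filter, sum_filter_mem_stepProb w (mem_compl.1 hx)]

theorem sum_stepProb_mul_card_compl_add (B : Finset V) :
    ∑ C, stepProb w B C * #Cᶜ + ∑ x ∈ Bᶜ, (turnProb w B x : ℝ≥0∞) = #Bᶜ := by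
  rw [← sum_stepProb_mul_card_sdiff, ← sum_add_distrib]
  calc ∑ C, (stepProb w B C * #Cᶜ + stepProb w B C * #(C \ B))
      = ∑ C, stepProb w B C * #Bᶜ := by
        refine sum_congr rfl fun C _ => ?_
        rcases eq_or_ne (stepProb w B C) 0 with h | h
        · simp [h]
        have hBC := subset_of_stepProb_ne_zero w h
        rw [← mul_add, ← Nat.cast_add, card_compl, card_compl, card_sdiff_of_subset hBC]
        have := card_le_card hBC
        have := card_le_univ C
        congr 2
        omega
    _ = #Bᶜ := by rw [← sum_mul, sum_stepProb, one_mul]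

variable {w} {S : Finset V}

theorem state_succ_sum_mul (φ : Finset V → ℝ≥0∞) (t : ℕ) :
    ∑ C, state w S (t + 1) C * φ C = ∑ B, state w S t B * ∑ C, stepProb w B C * φ C := by
  simp only [state, sum_mul, mul_sum, mul_assoc]
  exact sum_comm

theorem of_state_ne_zero {A : Finset V → Prop} (hS : A S)
    (hstep : ∀ B C, A B → stepProb w B C ≠ 0 → A C) {t : ℕ} {C : Finset V}
    (hC : state w S t C ≠ 0) : A C := by
  induction t generalizing C with
  | zero => by_cases h : C = S <;> simp_all [state]
  | succ t ih =>
    obtain ⟨B, -, hB⟩ := exists_ne_zero_of_sum_ne_zero hC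
    exact hstep B C (ih (left_ne_zero_of_mul hB)) (right_ne_zero_of_mul hB)

theorem ept_eq_card_compl {A : Finset V → Prop} (hS : A S)
    (hstep : ∀ B C, A B → stepProb w B C ≠ 0 → A C)
    (hsum : ∀ B, A B → B ≠ univ → ∑ x ∈ Bᶜ, (turnProb w B x : ℝ≥0∞) = 1) :
    ept w S = #Sᶜ := by
  set M : ℕ → ℝ≥0∞ := fun t => ∑ C, state w S t C * #Cᶜ
  set P : ℕ → ℝ≥0∞ := fun t => ∑ C with C ≠ univ, state w S t C
  have hP (t : ℕ) :
      P t = ∑ B, state w S t B * ∑ x ∈ Bᶜ, (turnProb w B x : ℝ≥0∞) := by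
    rw [← sum_filter_of_ne (p := (· ≠ univ)) fun B _ h => by rintro rfl; simp at h]
    refine sum_congr rfl fun B hB => ?_
    rcases eq_or_ne (state w S t B) 0 with h | h
    · rw [h, zero_mul]
    · rw [hsum B (of_state_ne_zero hS hstep h) (mem_filter.1 hB).2, mul_one]
  have hMP (t : ℕ) : M t ≤ Fintype.card V * P t := by
    have hfilter : M t = ∑ C with C ≠ univ, state w S t C * #Cᶜ :=
      (sum_filter_of_ne fun C _ h => by rintro rfl; simp at h).symm
    rw [hfilter, mul_sum]
    refine sum_le_sum fun C _ => ?_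
    rw [mul_comm]
    gcongr
    exact_mod_cast card_le_univ _
  have hdrop (t : ℕ) : M (t + 1) + P t = M t := by
    simp only [M, hP, state_succ_sum_mul, ← sum_add_distrib, ← mul_add,
      sum_stepProb_mul_card_compl_add]
  have hM₀ : M 0 = #Sᶜ := by simp [M, state]
  rw [ept, ENNReal.tsum_eq_of_succ_add_eq_of_le_mul (hM₀ ▸ ENNReal.natCast_ne_top _)
    (ENNReal.natCast_ne_top _) hdrop hMP, hM₀]

end RZF

section Cycle

open Fin.NatCast Fin.CommRing RZF

variable {n : ℕ} [NeZero n] {p q : ℝ≥0}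

namespace Fin

-- `{j, j + 1, …, j + k - 1}` taken mod `n`: all of `Fin n` as soon as `n ≤ k`.
def arc (j : Fin n) (k : ℕ) : Finset (Fin n) :=
  (Finset.range k).image fun i : ℕ => j + (i : Fin n)

variable {j x : Fin n} {k : ℕ}

theorem mem_arc : x ∈ arc j k ↔ ∃ i < k, j + i = x := by simp [arc]

theorem card_arc (hk : k ≤ n) : #(arc j k) = k := by
  rw [arc, card_image_of_injOn, card_range]
  intro i hi i' hi' h
  have hin : i < n := (mem_range.1 hi).trans_le hk
  have hin' : i' < n := (mem_range.1 hi').trans_le hk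
  simpa [Fin.ext_iff, Nat.mod_eq_of_lt hin, Nat.mod_eq_of_lt hin'] using add_left_cancel h

theorem arc_self (j : Fin n) : arc j n = univ :=
  eq_univ_of_card _ (by rw [card_arc le_rfl, Fintype.card_fin])

theorem arc_mono (j : Fin n) : Monotone (arc j) := fun _ _ h =>
  image_subset_image (range_subset_range.2 h)

theorem arc_succ (j : Fin n) (k : ℕ) : arc j (k + 1) = insert (j + k) (arc j k) := by
  rw [arc, range_add_one, image_insert, arc]

theorem arc_sub_one_succ (j : Fin n) (k : ℕ) :
    arc (j - 1) (k + 1) = insert (j - 1) (arc j k) := by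
  rw [arc, range_add_one', image_insert, map_eq_image, image_image, arc]
  congr 1
  · simp
  · refine image_congr fun i _ => ?_
    change j - 1 + ((i + 1 : ℕ) : Fin n) = j + i
    push_cast
    ring

theorem add_natCast_notMem_arc (hk : k < n) : j + k ∉ arc j k := by
  intro h
  have := card_arc (j := j) hk
  rw [arc_succ, insert_eq_of_mem h, card_arc hk.le] at this
  omega

theorem sub_one_notMem_arc (hk : k < n) : j - 1 ∉ arc j k := by
  intro h
  have := card_arc (j := j - 1) hk
  rw [arc_sub_one_succ, insert_eq_of_mem h, card_arc hk.le] at this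
  omega

theorem sub_one_mem_arc_iff (hk : 1 ≤ k) (hx : x ∉ arc j k) :
    x - 1 ∈ arc j k ↔ x = j + k := by
  simp only [mem_arc] at hx ⊢
  constructor
  · rintro ⟨i, hi, hix⟩
    obtain rfl : i + 1 = k := by
      by_contra hne
      exact hx ⟨i + 1, by omega, by rw [Nat.cast_succ, ← add_assoc, hix, sub_add_cancel]⟩
    rw [Nat.cast_succ, ← add_assoc, hix, sub_add_cancel]
  · rintro rfl
    exact ⟨k - 1, by omega, by rw [Nat.cast_sub hk, Nat.cast_one, add_sub_assoc]⟩

theorem add_one_mem_arc_iff (hk : 1 ≤ k) (hx : x ∉ arc j k) :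
    x + 1 ∈ arc j k ↔ x = j - 1 := by
  simp only [mem_arc] at hx ⊢
  constructor
  · rintro ⟨i, hi, hix⟩
    obtain rfl : i = 0 := by
      by_contra hne
      refine hx ⟨i - 1, by omega, ?_⟩
      rw [Nat.cast_sub (by omega), Nat.cast_one, ← add_sub_assoc, hix, add_sub_cancel_right]
    rw [eq_sub_iff_add_eq, ← hix, Nat.cast_zero, add_zero]
  · rintro rfl
    exact ⟨0, hk, by simp⟩

end Fin

theorem cycleWeight_apply (u x : Fin n) :
    cycleWeight n p q u x = (if x = u + 1 then p else 0) + (if u = x + 1 then q else 0) := by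
  have hval : ∀ v : Fin n, ((v + 1 : Fin n) : ℕ) = ((v : ℕ) + 1) % n := by simp [Fin.val_add]
  simp only [cycleWeight, Fin.ext_iff, hval, eq_comm (a := (u : ℕ))]

theorem sum_cycleWeight (B : Finset (Fin n)) (x : Fin n) :
    ∑ u ∈ B, cycleWeight n p q u x =
      (if x - 1 ∈ B then p else 0) + (if x + 1 ∈ B then q else 0) := by
  simp only [cycleWeight_apply, sum_add_distrib, eq_comm (a := x), ← eq_sub_iff_add_eq,
    sum_ite_eq']

theorem turnProb_cycleWeight (B : Finset (Fin n)) (x : Fin n) :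
    turnProb (cycleWeight n p q) B x =
      ((if x - 1 ∈ B then p else 0) + (if x + 1 ∈ B then q else 0)) / (p + q) := by
  simp only [turnProb, sum_cycleWeight, mem_univ, if_true]

namespace Fin

def IsArc (C : Finset (Fin n)) : Prop := ∃ j k, 1 ≤ k ∧ C = arc j k

theorem turnProb_cycleWeight_arc {j x : Fin n} {k : ℕ} (hk : 1 ≤ k) (hx : x ∉ arc j k) :
    turnProb (cycleWeight n p q) (arc j k) x =
      ((if x = j + k then p else 0) + (if x = j - 1 then q else 0)) / (p + q) := by
  simp only [turnProb_cycleWeight, sub_one_mem_arc_iff hk hx, add_one_mem_arc_iff hk hx]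

theorem IsArc.of_stepProb_cycleWeight_ne_zero {B C : Finset (Fin n)} (hB : IsArc B)
    (h : stepProb (cycleWeight n p q) B C ≠ 0) : IsArc C := by
  obtain ⟨j, k, hk, rfl⟩ := hB
  have hBC := subset_of_stepProb_ne_zero _ h
  have hnew : ∀ x ∈ C, x ∉ arc j k → x = j + k ∨ x = j - 1 := by
    intro x hxC hxB
    have := turnProb_ne_zero_of_stepProb_ne_zero _ h hxC hxB
    rw [turnProb_cycleWeight_arc hk hxB] at this
    by_contra! hx
    simp [hx] at this
  by_cases hl : j - 1 ∈ C <;> by_cases hr : j + (k : Fin n) ∈ C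
  · refine ⟨j - 1, k + 2, by omega, ?_⟩
    rw [arc_sub_one_succ, arc_succ]
    ext
    simp only [mem_insert]
    grind
  · refine ⟨j - 1, k + 1, by omega, ?_⟩
    rw [arc_sub_one_succ]
    ext
    simp only [mem_insert]
    grind
  · refine ⟨j, k + 1, by omega, ?_⟩
    rw [arc_succ]
    ext
    simp only [mem_insert]
    grind
  · exact ⟨j, k, hk, by ext; grind⟩

theorem IsArc.sum_compl_turnProb_cycleWeight {C : Finset (Fin n)} (hC : IsArc C)
    (hpq : p + q ≠ 0) (hne : C ≠ univ) :
    ∑ x ∈ Cᶜ, (turnProb (cycleWeight n p q) C x : ℝ≥0∞) = 1 := by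
  obtain ⟨j, k, hk, rfl⟩ := hC
  have hkn : k < n := lt_of_not_ge fun h => hne (univ_subset_iff.1 (arc_self j ▸ arc_mono j h))
  rw [← ENNReal.ofNNReal_finsetSum,
    sum_congr rfl fun x hx => turnProb_cycleWeight_arc hk (mem_compl.1 hx), ← sum_div,
    sum_add_distrib, sum_ite_eq', sum_ite_eq', if_pos (mem_compl.2 (add_natCast_notMem_arc hkn)),
    if_pos (mem_compl.2 (sub_one_notMem_arc hkn)), div_self hpq, ENNReal.coe_one]

theorem image_range_mod_eq_arc (j k : ℕ) :
    (Finset.range k).image (fun i => (⟨(j + i) % n, Nat.mod_lt _ (NeZero.pos n)⟩ : Fin n)) =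
      arc (j : Fin n) k :=
  image_congr fun i _ => Fin.ext (by simp [Fin.val_add])

end Fin

end Cycle

/-- For the weighted bidirected cycle on `n` vertices with
clockwise weights `p > 0` and counterclockwise weights `q > 0`, started from
`k` consecutive vertices (`1 ≤ k ≤ n`), the expected propagation time is
`n - k`; in particular it is independent of `p` and `q`. -/
theorem rzf_cycle_ept (n k : ℕ) (hk1 : 1 ≤ k) (hkn : k ≤ n)
    (p q : ℝ≥0) (hp : 0 < p) (hq : 0 < q) (j : ℕ) :
    RZF.ept (cycleWeight n p q)
        ((Finset.range k).image (fun i => (⟨(j + i) % n, Nat.mod_lt _ (by omega)⟩ : Fin n))) =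
      ((n - k : ℕ) : ℝ≥0∞) := by
  have : NeZero n := ⟨by omega⟩
  rw [Fin.image_range_mod_eq_arc, RZF.ept_eq_card_compl (A := Fin.IsArc) ⟨_, k, hk1, rfl⟩
    (fun _ _ hB => hB.of_stepProb_cycleWeight_ne_zero)
    (fun _ hB => hB.sum_compl_turnProb_cycleWeight (add_pos hp hq).ne'),
    card_compl, Fintype.card_fin, Fin.card_arc hkn]
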